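/- For every integer n ≥ 3, if f is a maximal irredundant broadcast on the path P_n, then H_f(x_2) ≠ ∅ and H_f(x_{n−1}) ≠ ∅, i.e. the second and the second-to-last vertices of P_n are f-dominated. -/

import Mathlib

open SimpleGraph

namespace Broadcast

variable {V : Type*} [Fintype V]

/-- The eccentricity of a vertex: the maximum distance from `v` to any vertex. -/
noncomputable def ecc (G : SimpleGraph V) (v : V) : ℕ :=
  Finset.univ.sup fun u => G.dist v u

/-- A broadcast on `G`: `f v ≤ e_G(v)` for every vertex `v`. -/
def IsBroadcast (G : SimpleGraph V) (f : V → ℕ) : Prop :=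
  ∀ v, f v ≤ ecc G v

/-- The cost of a broadcast. -/
def cost (f : V → ℕ) : ℕ := ∑ v, f v

/-- `hears G f u` is H_f(u): the set of f-broadcast vertices `v` with `d(u,v) ≤ f v`. -/
def hears (G : SimpleGraph V) (f : V → ℕ) (u : V) : Set V :=
  {v | 1 ≤ f v ∧ G.dist u v ≤ f v}

/-- A dominating broadcast: every vertex hears some broadcast vertex. -/
def IsDominating (G : SimpleGraph V) (f : V → ℕ) : Prop :=
  IsBroadcast G f ∧ ∀ u, (hears G f u).Nonempty

/-- A minimal dominating broadcast. -/
def IsMinimalDominating (G : SimpleGraph V) (f : V → ℕ) : Prop :=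
  IsDominating G f ∧ ∀ g, IsDominating G g → (∀ v, g v ≤ f v) → g = f

/-- The broadcast domination number γ_b: minimum cost of a dominating broadcast. -/
noncomputable def broadcastDomination (G : SimpleGraph V) : ℕ :=
  sInf {c | ∃ f, IsDominating G f ∧ cost f = c}

/-- The upper broadcast domination number Γ_b: maximum cost of a minimal dominating broadcast. -/
noncomputable def upperBroadcastDomination (G : SimpleGraph V) : ℕ :=
  sSup {c | ∃ f, IsMinimalDominating G f ∧ cost f = c}

/-- The private f-neighborhood PN_f(v): vertices hearing only `v`. -/
def privateNbhd (G : SimpleGraph V) (f : V → ℕ) (v : V) : Set V :=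
  {u | hears G f u = {v}}

open Classical in
/-- The private f-border PB_f(v). -/
noncomputable def privateBorder (G : SimpleGraph V) (f : V → ℕ) (v : V) : Set V :=
  if f v = 1 ∧ privateNbhd G f v = {v} then {v}
  else {u | u ∈ privateNbhd G f v ∧ G.dist u v = f v}

/-- An irredundant broadcast: every broadcast vertex has a nonempty private border. -/
def IsIrredundant (G : SimpleGraph V) (f : V → ℕ) : Prop :=
  IsBroadcast G f ∧ ∀ v, 1 ≤ f v → (privateBorder G f v).Nonempty

/-- A maximal irredundant broadcast. -/
def IsMaximalIrredundant (G : SimpleGraph V) (f : V → ℕ) : Prop :=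
  IsIrredundant G f ∧ ∀ g, IsIrredundant G g → (∀ v, f v ≤ g v) → g = f

/-- The upper broadcast irredundance number IR_b: maximum cost of an irredundant broadcast. -/
noncomputable def upperBroadcastIrredundance (G : SimpleGraph V) : ℕ :=
  sSup {c | ∃ f, IsIrredundant G f ∧ cost f = c}

/-- The broadcast irredundance number ir_b: minimum cost of a maximal irredundant broadcast. -/
noncomputable def broadcastIrredundance (G : SimpleGraph V) : ℕ :=
  sInf {c | ∃ f, IsMaximalIrredundant G f ∧ cost f = c}

/-- An independent broadcast: every broadcast vertex hears only itself, i.e. |H_f(v)| = 1. -/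
def IsIndependent (G : SimpleGraph V) (f : V → ℕ) : Prop :=
  IsBroadcast G f ∧ ∀ v, 1 ≤ f v → hears G f v = {v}

/-- A maximal independent broadcast. -/
def IsMaximalIndependent (G : SimpleGraph V) (f : V → ℕ) : Prop :=
  IsIndependent G f ∧ ∀ g, IsIndependent G g → (∀ v, f v ≤ g v) → g = f

/-- The broadcast independence number β_b: maximum cost of an independent broadcast. -/
noncomputable def broadcastIndependence (G : SimpleGraph V) : ℕ :=
  sSup {c | ∃ f, IsIndependent G f ∧ cost f = c}

/-- The lower broadcast independence number i_b: minimum cost of a maximal independent broadcast. -/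
noncomputable def lowerBroadcastIndependence (G : SimpleGraph V) : ℕ :=
  sInf {c | ∃ f, IsMaximalIndependent G f ∧ cost f = c}

/-- A packing broadcast: every vertex hears at most one broadcast vertex. -/
def IsPacking (G : SimpleGraph V) (f : V → ℕ) : Prop :=
  IsBroadcast G f ∧ ∀ u, (hears G f u).Subsingleton

/-- A maximal packing broadcast. -/
def IsMaximalPacking (G : SimpleGraph V) (f : V → ℕ) : Prop :=
  IsPacking G f ∧ ∀ g, IsPacking G g → (∀ v, f v ≤ g v) → g = f

/-- The broadcast packing number P_b: maximum cost of a packing broadcast. -/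
noncomputable def broadcastPacking (G : SimpleGraph V) : ℕ :=
  sSup {c | ∃ f, IsPacking G f ∧ cost f = c}

/-- The lower broadcast packing number p_b: minimum cost of a maximal packing broadcast. -/
noncomputable def lowerBroadcastPacking (G : SimpleGraph V) : ℕ :=
  sInf {c | ∃ f, IsMaximalPacking G f ∧ cost f = c}

end Broadcast

namespace SimpleGraph

lemma pathGraph_natDist_le_length {n : ℕ} {i j : Fin n} (p : (pathGraph n).Walk i j) :
    Nat.dist i j ≤ p.length := by
  induction p with
  | nil => simp
  | cons h _ ih =>
    rw [pathGraph_adj] at h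
    simp only [Nat.dist, Walk.length_cons] at ih ⊢
    omega

lemma pathGraph_dist_le_of_val_eq_add {n : ℕ} (i : Fin n) (k : ℕ) :
    ∀ j : Fin n, (j : ℕ) = i + k → (pathGraph n).dist i j ≤ k := by
  induction k with
  | zero => intro j hj; rw [show j = i from Fin.ext (by omega), dist_self]
  | succ k ih =>
    intro j hj
    let j' : Fin n := ⟨i + k, by omega⟩
    have hadj : (pathGraph n).Adj j' j := pathGraph_adj.mpr (.inl hj.symm)
    calc (pathGraph n).dist i j ≤ (pathGraph n).dist i j' + (pathGraph n).dist j' j :=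
          hadj.reachable.dist_triangle_right i
      _ ≤ k + 1 := add_le_add (ih j' rfl) (dist_eq_one_iff_adj.mpr hadj).le

theorem pathGraph_dist {n : ℕ} (i j : Fin n) : (pathGraph n).dist i j = Nat.dist i j := by
  apply le_antisymm
  · rcases le_total (i : ℕ) j with h | h
    · exact (pathGraph_dist_le_of_val_eq_add i (j - i) j (by omega)).trans
        (by simp only [Nat.dist]; omega)
    · rw [dist_comm, Nat.dist_comm]
      exact (pathGraph_dist_le_of_val_eq_add j (i - j) i (by omega)).trans
        (by simp only [Nat.dist]; omega)
  · obtain ⟨p, hp⟩ := (pathGraph_preconnected n i j).exists_walk_length_eq_dist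
    exact hp ▸ pathGraph_natDist_le_length p

end SimpleGraph

namespace Broadcast

variable {V : Type*} {G : SimpleGraph V} {f : V → ℕ} {u w : V}

lemma hears_subset_hears (h : ∀ v, G.dist w v ≤ max 1 (G.dist u v)) :
    hears G f u ⊆ hears G f w :=
  fun v ⟨hv, huv⟩ => ⟨hv, (h v).trans (max_le hv huv)⟩

lemma eq_zero_of_hears_self_eq_empty (h : hears G f u = ∅) : f u = 0 := by
  by_contra hfu
  have : u ∈ hears G f u := ⟨by omega, by simp⟩
  simp [h] at this

section UpdateOne

variable [DecidableEq V]

lemma mem_hears_update_one_iff {x v : V} (hv : v ≠ u) :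
    v ∈ hears G (Function.update f u 1) x ↔ v ∈ hears G f x := by
  simp only [hears, Set.mem_ofPred_eq, Function.update_of_ne hv]

lemma hears_update_one_of_dist_le_one {x : V} (hfx : hears G f x = ∅) (hx : G.dist x u ≤ 1) :
    hears G (Function.update f u 1) x = {u} := by
  ext v
  by_cases hv : v = u
  · subst hv
    simpa [hears] using hx
  · simp [mem_hears_update_one_iff hv, hfx, hv]

lemma hears_update_one_of_one_lt_dist {x : V} (hfu : f u ≤ 1) (hx : 1 < G.dist x u) :
    hears G (Function.update f u 1) x = hears G f x := by
  ext v
  by_cases hv : v = u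
  · subst hv
    simp only [hears, Set.mem_ofPred_eq, Function.update_self]
    omega
  · exact mem_hears_update_one_iff hv

lemma privateNbhd_update_one (hquiet : ∀ x, G.dist x u ≤ 1 → hears G f x = ∅) {v : V}
    (hv : v ≠ u) : privateNbhd G (Function.update f u 1) v = privateNbhd G f v := by
  have hfu : f u ≤ 1 := (eq_zero_of_hears_self_eq_empty (hquiet u (by simp))).trans_le zero_le_one
  ext x
  simp only [privateNbhd, Set.mem_ofPred_eq]
  rcases le_or_gt (G.dist x u) 1 with hx | hx
  · rw [hears_update_one_of_dist_le_one (hquiet x hx) hx, hquiet x hx]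
    simp [Ne.symm hv, Set.empty_ne_singleton]
  · rw [hears_update_one_of_one_lt_dist hfu hx]

lemma privateBorder_update_one (hquiet : ∀ x, G.dist x u ≤ 1 → hears G f x = ∅) {v : V}
    (hv : v ≠ u) : privateBorder G (Function.update f u 1) v = privateBorder G f v := by
  simp only [privateBorder, privateNbhd_update_one hquiet hv, Function.update_of_ne hv]

lemma mem_privateBorder_update_one (hfw : hears G f w = ∅) (huw : G.Adj u w) :
    w ∈ privateBorder G (Function.update f u 1) u := by
  have hwu : G.dist w u = 1 := dist_eq_one_iff_adj.mpr huw.symm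
  have hw : w ∈ privateNbhd G (Function.update f u 1) u :=
    hears_update_one_of_dist_le_one hfw hwu.le
  rw [privateBorder, if_neg]
  · exact ⟨hw, by simpa using hwu⟩
  · rintro ⟨-, hPN⟩
    exact huw.ne (hPN ▸ hw).symm

lemma IsIrredundant.update_one [Fintype V] (hf : IsIrredundant G f)
    (hquiet : ∀ x, G.dist x u ≤ 1 → hears G f x = ∅) (huw : G.Adj u w) :
    IsIrredundant G (Function.update f u 1) := by
  refine ⟨fun v => ?_, fun v hv => ?_⟩ <;> by_cases hvu : v = u
  · subst hvu
    rw [Function.update_self, ← dist_eq_one_iff_adj.mpr huw]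
    exact Finset.le_sup (f := G.dist v) (Finset.mem_univ w)
  · simpa [Function.update_of_ne hvu] using hf.1 v
  · subst hvu
    exact ⟨w, mem_privateBorder_update_one (hquiet w (dist_eq_one_iff_adj.mpr huw.symm).le) huw⟩
  · rw [privateBorder_update_one hquiet hvu]
    exact hf.2 v (by simpa [Function.update_of_ne hvu] using hv)

end UpdateOne

theorem IsMaximalIrredundant.exists_dist_le_one_hears_nonempty [Fintype V]
    (hf : IsMaximalIrredundant G f) (huw : G.Adj u w) :
    ∃ x, G.dist x u ≤ 1 ∧ (hears G f x).Nonempty := by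
  classical
  by_contra! hquiet
  have hfu := eq_zero_of_hears_self_eq_empty (hquiet u (by simp))
  have hg := hf.2 _ (hf.1.update_one hquiet huw) fun v => by
    by_cases hv : v = u <;> simp [hv, hfu]
  simpa [hfu] using congrFun hg u

theorem IsMaximalIrredundant.hears_nonempty_of_adj [Fintype V] (hf : IsMaximalIrredundant G f)
    (huw : G.Adj u w) (hw : ∀ x, G.dist x u ≤ 1 → ∀ v, G.dist w v ≤ max 1 (G.dist x v)) :
    (hears G f w).Nonempty := by
  obtain ⟨x, hxu, hx⟩ := hf.exists_dist_le_one_hears_nonempty huw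
  exact hx.mono (hears_subset_hears (hw x hxu))

end Broadcast

open Broadcast in
/-- For every n ≥ 3 and every maximal irredundant broadcast f on P_n,
H_f(x_2) ≠ ∅ and H_f(x_{n-1}) ≠ ∅. -/
theorem second_vertices_dominated_of_maximal_irredundant_pathGraph (n : ℕ) (hn : 3 ≤ n)
    (f : Fin n → ℕ) (hf : IsMaximalIrredundant (SimpleGraph.pathGraph n) f) :
    hears (SimpleGraph.pathGraph n) f ⟨1, by omega⟩ ≠ ∅ ∧
    hears (SimpleGraph.pathGraph n) f ⟨n - 2, by omega⟩ ≠ ∅ := by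
  refine ⟨(hf.hears_nonempty_of_adj (u := ⟨0, by omega⟩)
      (pathGraph_adj.mpr (.inl rfl)) ?_).ne_empty,
    (hf.hears_nonempty_of_adj (u := ⟨n - 1, by omega⟩)
      (pathGraph_adj.mpr (.inr (by dsimp only; omega))) ?_).ne_empty⟩ <;>
  · intro x hx v
    simp only [pathGraph_dist, Nat.dist] at hx ⊢
    omega
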